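/- Let γ > 1 and v₋ > 0, and let p(v) = v^{-γ}. There exist constants C > 0 and δ* > 0 such that for every δ with 0 < δ < δ* and every pair v, w > 0 satisfying |p(v) − p(w)| < δ and |p(w) − p(v₋)| < δ, one has p(v|w) ≤ ( (γ+1)/(2γ) · 1/p(w) + Cδ ) · (p(v) − p(w))². -/

import Mathlib

open Real Set

/-- Tangent line inequality for `s ↦ s^(-β)` (convexity): `1 - β(s-1) ≤ s^(-β)`. -/
lemma tangent_lower {β s : ℝ} (hβ : 0 < β) (hs : 0 < s) :
    1 - β * (s - 1) ≤ s ^ (-β) := by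
  have hβ1 : (0:ℝ) < 1 + β := by linarith
  have h := Real.geom_mean_le_arith_mean2_weighted
    (by positivity : (0:ℝ) ≤ 1/(1+β)) (by positivity : (0:ℝ) ≤ β/(1+β))
    (Real.rpow_pos_of_pos hs (-β)).le hs.le (by field_simp)
  have key : (s ^ (-β)) ^ (1/(1+β)) * s ^ (β/(1+β)) = 1 := by
    rw [← Real.rpow_mul hs.le, ← Real.rpow_add hs,
      show -β * (1/(1+β)) + β/(1+β) = 0 by field_simp; ring, Real.rpow_zero]
  rw [key] at h
  have e : 1/(1+β) * (s^(-β)) + β/(1+β) * s = (s^(-β) + β*s)/(1+β) := by ring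
  rw [e, le_div_iff₀ hβ1] at h
  nlinarith [h]

/-- Second-order upper bound for the remainder `s^(-β) - 1 + β(s-1)` on `[1/2, 1]`. -/
lemma remainder_upper {β : ℝ} (hβ : 1 < β) {s : ℝ} (hs : s ∈ Icc (1/2:ℝ) 1) :
    s ^ (-β) - 1 + β * (s - 1) ≤ (β * (β+1) * 2 ^ (β+1)) * (s-1)^2 := by
  have hβ0 : (0:ℝ) < β := by linarith
  set M : ℝ := β * (β+1) * 2 ^ (β+1) with hM
  have hM0 : 0 < M := by positivity
  set φ : ℝ → ℝ := fun t => M * (t-1)^2 - (t ^ (-β) - 1 + β * (t - 1)) with hφ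
  have hd : ∀ t : ℝ, 0 < t →
      HasDerivAt φ (M * (2*(t-1)) - ((-β) * t ^ (-β-1) + β)) t := by
    intro t ht
    have h1 : HasDerivAt (fun t : ℝ => t ^ (-β)) ((-β) * t ^ (-β - 1)) t :=
      Real.hasDerivAt_rpow_const (Or.inl ht.ne')
    have h2 : HasDerivAt (fun t : ℝ => M * (t-1)^2) (M * (2*(t-1))) t := by
      have h3 : HasDerivAt (fun t : ℝ => (t-1)^2) (2*(t-1)^1*1) t :=
        ((hasDerivAt_id t).sub_const 1).pow 2
      have := h3.const_mul M
      simpa [mul_comm, mul_assoc, mul_left_comm] using this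
    have h4 : HasDerivAt (fun t : ℝ => t ^ (-β) - 1 + β * (t - 1))
        ((-β) * t ^ (-β-1) + β) t := by
      have h5 := ((hasDerivAt_id t).sub_const 1).const_mul β
      have := (h1.sub_const 1).add h5
      exact this.congr_deriv (by ring)
    exact h2.sub h4
  have hanti : AntitoneOn φ (Icc (1/2:ℝ) 1) := by
    apply antitoneOn_of_deriv_nonpos (convex_Icc _ _)
    · intro t ht
      exact (hd t (by have := ht.1; linarith)).continuousAt.continuousWithinAt
    · rw [interior_Icc]
      intro t ht
      exact (hd t (by have := ht.1; linarith)).differentiableAt.differentiableWithinAt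
    · rw [interior_Icc]
      intro t ht
      have ht0 : (0:ℝ) < t := by have := ht.1; linarith
      rw [(hd t ht0).deriv]
      -- need : M * (2*(t-1)) - ((-β) * t^(-β-1) + β) ≤ 0
      have hA : t ^ (-β-1) = t ^ (-(β+1)) := by rw [show -β-1 = -(β+1) by ring]
      have hA2 : t ^ (-(β+1)) ≤ ((1:ℝ)/2) ^ (-(β+1)) :=
        Real.rpow_le_rpow_of_nonpos (by norm_num) (by have := ht.1; linarith) (by linarith)
      have hhalf : ((1:ℝ)/2) ^ (-(β+1)) = 2 ^ (β+1) := by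
        rw [Real.rpow_neg (by norm_num), Real.div_rpow (by norm_num) (by norm_num),
          Real.one_rpow]
        simp
      have hmul : t ^ (-(β+1)) * t ^ (β+1) = 1 := by
        rw [← Real.rpow_add ht0, show -(β+1)+(β+1) = 0 by ring, Real.rpow_zero]
      have hBle : t ^ (β+1) ≤ 1 := Real.rpow_le_one ht0.le ht.2.le (by linarith)
      have hbern : 1 + (β+1) * (t-1) ≤ t ^ (β+1) := by
        have := one_add_mul_self_le_rpow_one_add
          (by linarith [ht.1] : (-1:ℝ) ≤ t - 1) (by linarith : (1:ℝ) ≤ β+1)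
        rwa [show (1:ℝ) + (t-1) = t by ring] at this
      have hApos : 0 < t ^ (-(β+1)) := Real.rpow_pos_of_pos ht0 _
      rw [hA]
      set A := t ^ (-(β+1)) with hAdef
      set B := t ^ (β+1) with hBdef
      -- goal: M * (2*(t-1)) - (-β * A + β) ≤ 0
      have h2pow : A ≤ 2 ^ (β+1) := hhalf ▸ hA2
      have key : β * A - β ≤ M * (1 - t) := by
        have e1 : β * A - β = β * A * (1 - B) := by
          have : A * B = 1 := hmul
          nlinarith [this]
        rw [e1]
        have h1B : 1 - B ≤ (β+1) * (1-t) := by nlinarith [hbern]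
        have h1Bnn : 0 ≤ 1 - B := by linarith
        have htle : 0 ≤ 1 - t := by linarith [ht.2]
        calc β * A * (1 - B) ≤ β * (2 ^ (β+1)) * (1 - B) := by
              nlinarith [mul_nonneg (sub_nonneg.2 h2pow) h1Bnn, hβ0.le]
          _ ≤ β * (2 ^ (β+1)) * ((β+1)*(1-t)) := by
              have hpos : (0:ℝ) ≤ β * 2 ^ (β+1) := by positivity
              exact mul_le_mul_of_nonneg_left h1B hpos
          _ = M * (1 - t) := by rw [hM]; ring
      nlinarith [key, ht.2, hM0]
  have h1mem : (1:ℝ) ∈ Icc (1/2:ℝ) 1 := by constructor <;> norm_num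
  have := hanti hs h1mem hs.2
  have hφ1 : φ 1 = 0 := by simp [hφ]
  have hφs : φ s = M * (s-1)^2 - (s ^ (-β) - 1 + β * (s - 1)) := rfl
  rw [hφ1] at this
  rw [hφs] at this
  linarith

/-- One-variable bound: `G(s) = s - 1 + γ(s^(-1/γ) - 1) ≤ (β/2 + K|s-1|)(s-1)²` for `s ≥ 1/2`. -/
lemma Gbound {γ : ℝ} (hγ : 1 < γ) {s : ℝ} (hs2 : 1/2 ≤ s) :
    s - 1 + γ * (s ^ (-(1/γ)) - 1) ≤
      ((γ+1)/(2*γ) + ((1+1/γ) * ((1+1/γ)+1) * 2 ^ ((1+1/γ)+1)) * |s-1|) * (s-1)^2 := by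
  have hγ0 : (0:ℝ) < γ := by linarith
  have hinv : (0:ℝ) < 1/γ := by positivity
  set β : ℝ := 1 + 1/γ with hβdef
  have hβ1 : 1 < β := by rw [hβdef]; linarith
  set K : ℝ := β * (β+1) * 2 ^ (β+1) with hK
  have hK0 : 0 < K := by positivity
  have ha : (γ+1)/(2*γ) = β/2 := by
    rw [hβdef, div_eq_div_iff (by positivity) (by norm_num : (2:ℝ) ≠ 0)]
    field_simp
  set G : ℝ → ℝ := fun t => t - 1 + γ * (t ^ (-(1/γ)) - 1) with hGdef
  have hG : ∀ t : ℝ, 0 < t → HasDerivAt G (1 - t ^ (-β)) t := by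
    intro t ht
    have h1 : HasDerivAt (fun t:ℝ => t ^ (-(1/γ))) ((-(1/γ)) * t ^ (-(1/γ)-1)) t :=
      Real.hasDerivAt_rpow_const (Or.inl ht.ne')
    have h2 : HasDerivAt G (1 + γ * ((-(1/γ)) * t ^ (-(1/γ)-1))) t :=
      ((hasDerivAt_id' t).sub_const 1).add ((h1.sub_const 1).const_mul γ)
    have e : 1 + γ * ((-(1/γ)) * t ^ (-(1/γ)-1)) = 1 - t ^ (-β) := by
      rw [show -(1/γ)-1 = -β by rw [hβdef]; ring]
      field_simp
      ring
    rwa [e] at h2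
  rcases le_or_gt 1 s with h1s | h1s
  · -- case s ≥ 1 : G(s) ≤ (β/2)(s-1)²
    set h : ℝ → ℝ := fun t => β/2 * (t-1)^2 - G t with hhdef
    have hd : ∀ t : ℝ, 0 < t → HasDerivAt h (β/2 * (2*(t-1)^1*1) - (1 - t ^ (-β))) t := by
      intro t ht
      have h4 : HasDerivAt (fun t : ℝ => (t-1)^2) (2*(t-1)^1*1) t :=
        ((hasDerivAt_id' t).sub_const 1).pow 2
      exact (h4.const_mul (β/2)).sub (hG t ht)
    have hmono : MonotoneOn h (Ici (1:ℝ)) := by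
      apply monotoneOn_of_deriv_nonneg (convex_Ici _)
      · intro t ht
        exact (hd t (by have := mem_Ici.1 ht; linarith)).continuousAt.continuousWithinAt
      · rw [interior_Ici]
        intro t ht
        exact (hd t (by have := mem_Ioi.1 ht; linarith)).differentiableAt.differentiableWithinAt
      · rw [interior_Ici]
        intro t ht
        have ht1 : (1:ℝ) < t := mem_Ioi.1 ht
        have ht0 : (0:ℝ) < t := by linarith
        rw [(hd t ht0).deriv]
        have htan := tangent_lower (by linarith : (0:ℝ) < β) ht0
        have e : β/2 * (2*(t-1)^1*1) - (1 - t ^ (-β)) = t ^ (-β) - (1 - β*(t-1)) := by ring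
        rw [e]
        linarith
    have := hmono (mem_Ici.2 le_rfl) (mem_Ici.2 h1s) h1s
    have hh1 : h 1 = 0 := by simp [hhdef, hGdef]
    rw [hh1] at this
    have hGs : G s ≤ β/2 * (s-1)^2 := by
      have h0 : (0:ℝ) ≤ β/2 * (s-1)^2 - G s := this
      linarith
    have habs : 0 ≤ K * |s-1| * (s-1)^2 := by positivity
    rw [ha]
    calc s - 1 + γ * (s ^ (-(1/γ)) - 1) = G s := rfl
      _ ≤ β/2 * (s-1)^2 := hGs
      _ ≤ (β/2 + K * |s-1|) * (s-1)^2 := by nlinarith [habs]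
  · -- case 1/2 ≤ s < 1
    set H : ℝ → ℝ := fun t => (β/2 + K*(1-t)) * (t-1)^2 - G t with hHdef
    have hd : ∀ t : ℝ, 0 < t →
        HasDerivAt H ((-K) * (t-1)^2 + (β/2 + K*(1-t)) * (2*(t-1)^1*1) - (1 - t ^ (-β))) t := by
      intro t ht
      have hf : HasDerivAt (fun t : ℝ => β/2 + K*(1-t)) (-K) t := by
        have h5 : HasDerivAt (fun t : ℝ => (-K)*t + (β/2+K)) (-K) t := by
          have := (hasDerivAt_id' t).const_mul (-K)
          simpa using this.add_const (β/2+K)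
        have e : (fun t : ℝ => β/2 + K*(1-t)) = fun t : ℝ => (-K)*t + (β/2+K) := by
          funext t; ring
        rwa [e]
      have hg : HasDerivAt (fun t : ℝ => (t-1)^2) (2*(t-1)^1*1) t :=
        ((hasDerivAt_id' t).sub_const 1).pow 2
      exact (hf.mul hg).sub (hG t ht)
    have hanti : AntitoneOn H (Icc (1/2:ℝ) 1) := by
      apply antitoneOn_of_deriv_nonpos (convex_Icc _ _)
      · intro t ht
        exact (hd t (by have := ht.1; linarith)).continuousAt.continuousWithinAt
      · rw [interior_Icc]
        intro t ht
        exact (hd t (by have := ht.1; linarith)).differentiableAt.differentiableWithinAt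
      · rw [interior_Icc]
        intro t ht
        have ht0 : (0:ℝ) < t := by have := ht.1; linarith
        rw [(hd t ht0).deriv]
        have hrem := remainder_upper hβ1 (Ioo_subset_Icc_self ht)
        rw [← hK] at hrem
        have e : (-K) * (t-1)^2 + (β/2 + K*(1-t)) * (2*(t-1)^1*1) - (1 - t ^ (-β))
            = (t ^ (-β) - 1 + β*(t-1)) - 3*(K*(t-1)^2) := by ring
        rw [e]
        have h2 : 0 ≤ K*(t-1)^2 := mul_nonneg hK0.le (sq_nonneg _)
        linarith
    have := hanti ⟨hs2, h1s.le⟩ (by constructor <;> norm_num) h1s.le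
    have hH1 : H 1 = 0 := by simp [hHdef, hGdef]
    rw [hH1] at this
    have hGs : G s ≤ (β/2 + K*(1-s)) * (s-1)^2 := by
      have h0 : (0:ℝ) ≤ (β/2 + K*(1-s)) * (s-1)^2 - G s := this
      linarith
    rw [ha, abs_of_nonpos (by linarith : s - 1 ≤ 0)]
    calc s - 1 + γ * (s ^ (-(1/γ)) - 1) = G s := rfl
      _ ≤ (β/2 + K*(1-s)) * (s-1)^2 := hGs
      _ = (β/2 + K * -(s-1)) * (s-1)^2 := by ring



/-- Sharp upper bound on the relative pressure: for `γ > 1`, `v₋ > 0`,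
`p(v) = v^(-γ)`, `p(v|w) = v^(-γ) - w^(-γ) + γ w^(-γ-1)(v-w)`, there are
`C, δ* > 0` such that for `0 < δ < δ*` and `v, w > 0` with `|p(v)-p(w)| < δ`
and `|p(w)-p(v₋)| < δ` one has
`p(v|w) ≤ ((γ+1)/(2γ) ⬝ 1/p(w) + Cδ)(p(v)-p(w))²`. -/
theorem stmt_3 (γ vminus : ℝ) (hγ : 1 < γ) (hv : 0 < vminus) :
    ∃ C > 0, ∃ δstar > 0, ∀ δ : ℝ, 0 < δ → δ < δstar →
      ∀ v w : ℝ, 0 < v → 0 < w →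
        |v ^ (-γ) - w ^ (-γ)| < δ → |w ^ (-γ) - vminus ^ (-γ)| < δ →
        v ^ (-γ) - w ^ (-γ) + γ * w ^ (-γ - 1) * (v - w)
          ≤ ((γ + 1) / (2 * γ) * (1 / w ^ (-γ)) + C * δ) * (v ^ (-γ) - w ^ (-γ)) ^ 2 := by
  have hγ0 : (0:ℝ) < γ := by linarith
  have hinv : (0:ℝ) < 1/γ := by positivity
  set Pm : ℝ := vminus ^ (-γ) with hPmdef
  have hPm0 : 0 < Pm := Real.rpow_pos_of_pos hv _
  set K : ℝ := (1+1/γ) * ((1+1/γ)+1) * 2 ^ ((1+1/γ)+1) with hKdef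
  have hK0 : 0 < K := by positivity
  set C : ℝ := 2*K/Pm^2 with hCdef
  have hC0 : 0 < C := by positivity
  refine ⟨C, hC0, Pm/4, by positivity, ?_⟩
  intro δ hδ0 hδs v w hv0 hw0 h1 h2
  set P : ℝ := v ^ (-γ) with hPdef
  set Q : ℝ := w ^ (-γ) with hQdef
  have hP0 : 0 < P := Real.rpow_pos_of_pos hv0 _
  have hQ0 : 0 < Q := Real.rpow_pos_of_pos hw0 _
  have hQlow : 3*Pm/4 < Q := by
    have := abs_lt.1 h2
    linarith [this.1]
  set s : ℝ := P / Q with hsdef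
  have hs0 : 0 < s := div_pos hP0 hQ0
  have hPQ : P = Q * s := by rw [hsdef]; field_simp
  have hs1 : |s - 1| < δ / Q := by
    have e : s - 1 = (P - Q)/Q := by rw [hsdef]; field_simp
    rw [e, abs_div, abs_of_pos hQ0]
    gcongr
  have hδQ : δ/Q < 1/3 := by
    rw [div_lt_iff₀ hQ0]
    linarith
  have hs_half : 1/2 ≤ s := by
    have h3 := abs_lt.1 hs1
    linarith [h3.1]
  -- the key constant comparison
  have hQ2 : Pm^2 ≤ 2*Q^2 := by nlinarith
  have hCK : K ≤ C * Q^2 := by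
    have hCPm : C * Pm^2 = 2*K := by rw [hCdef]; field_simp
    nlinarith [mul_nonneg hC0.le (by linarith : (0:ℝ) ≤ 2*Q^2 - Pm^2)]
  have hstep : K * |s-1| ≤ C * δ * Q := by
    have ha1 : K * |s-1| ≤ K * (δ/Q) := mul_le_mul_of_nonneg_left hs1.le hK0.le
    have ha2 : K * (δ/Q) ≤ (C*Q^2) * (δ/Q) :=
      mul_le_mul_of_nonneg_right hCK (by positivity)
    have e : (C*Q^2) * (δ/Q) = C*δ*Q := by field_simp
    linarith
  -- the one-variable bound
  have hGb := Gbound hγ hs_half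
  rw [← hKdef] at hGb
  have hfinal : s - 1 + γ * (s ^ (-(1/γ)) - 1)
      ≤ ((γ+1)/(2*γ) + C*δ*Q) * (s-1)^2 := by
    have hmm : ((γ+1)/(2*γ) + K*|s-1|) * (s-1)^2 ≤ ((γ+1)/(2*γ) + C*δ*Q) * (s-1)^2 :=
      mul_le_mul_of_nonneg_right (by linarith) (sq_nonneg _)
    linarith
  -- identities for the goal
  have hw1 : w ^ (-γ-1) = Q * w⁻¹ := by
    rw [hQdef, show -γ-1 = -γ + (-1:ℝ) by ring, Real.rpow_add hw0, Real.rpow_neg_one]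
  have hsvw : s = (v/w) ^ (-γ) := by
    rw [hsdef, hPdef, hQdef, ← Real.div_rpow hv0.le hw0.le]
  have hvw : s ^ (-(1/γ)) = v / w := by
    rw [hsvw, ← Real.rpow_mul (by positivity : (0:ℝ) ≤ v/w),
      show (-γ) * (-(1/γ)) = 1 by field_simp, Real.rpow_one]
  have hLHS : P - Q + γ * w ^ (-γ-1) * (v - w) = Q * (s - 1 + γ * (s ^ (-(1/γ)) - 1)) := by
    rw [hw1, hvw, hPQ]
    field_simp
  have hRHS : ((γ+1)/(2*γ) * (1/Q) + C*δ) * (P - Q)^2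
      = Q * (((γ+1)/(2*γ) + C*δ*Q) * (s-1)^2) := by
    rw [hPQ]
    field_simp
  calc P - Q + γ * w ^ (-γ-1) * (v - w)
      = Q * (s - 1 + γ * (s ^ (-(1/γ)) - 1)) := hLHS
    _ ≤ Q * (((γ+1)/(2*γ) + C*δ*Q) * (s-1)^2) := mul_le_mul_of_nonneg_left hfinal hQ0.le
    _ = ((γ+1)/(2*γ) * (1/Q) + C*δ) * (P - Q)^2 := hRHS.symm
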